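/- (Welch bound) Let φ_1,…,φ_n be unit vectors in ℂ^d with n ≥ 2 and n ≥ d. Then max_{j ≠ k} |⟨φ_j,φ_k⟩| ≥ √((n−d)/(d(n−1))). -/

import Mathlib

/-! Flatten the frame operator `S = ∑ⱼ φⱼ φⱼᴴ` to a vector of `ℂ^(d × d)`. Its Hilbert–Schmidt
inner product with the identity is `tr S = ∑ⱼ ‖φⱼ‖² = n` and its squared norm is the frame potential
`∑_{j,k} |⟪φⱼ, φₖ⟫|²`, so Cauchy–Schwarz gives `n² ≤ d · ∑_{j,k} |⟪φⱼ, φₖ⟫|²`. For unit vectors the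
diagonal contributes `n` and each of the `n(n-1)` off-diagonal terms at most `M²`, where `M` is the
maximal coherence; solving `n² ≤ d (n + n(n-1) M²)` for `M²` gives the bound. -/

open scoped ComplexInnerProductSpace

noncomputable section

lemma offDiag_univ_nonempty {n : ℕ} (hn : 2 ≤ n) :
    ((Finset.univ : Finset (Fin n)).offDiag).Nonempty := by
  refine ⟨(⟨0, by omega⟩, ⟨1, by omega⟩), ?_⟩
  simp [Finset.mem_offDiag, Fin.ext_iff]

open Finset RCLike
open scoped InnerProductSpace ComplexConjugate

section FramePotential

variable {𝕜 ι κ : Type*} [RCLike 𝕜] [Fintype ι] [Fintype κ]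

-- The matrices `x xᴴ` and `1`, flattened to vectors of `𝕜^(ι × ι)`.
def outerSelf (x : EuclideanSpace 𝕜 ι) : EuclideanSpace 𝕜 (ι × ι) :=
  WithLp.toLp 2 fun p => x p.1 * conj (x p.2)

def identityVec [DecidableEq ι] : EuclideanSpace 𝕜 (ι × ι) :=
  WithLp.toLp 2 fun p => if p.1 = p.2 then 1 else 0

lemma inner_outerSelf (x y : EuclideanSpace 𝕜 ι) :
    ⟪outerSelf x, outerSelf y⟫_𝕜 = ((‖⟪x, y⟫_𝕜‖ ^ 2 : ℝ) : 𝕜) := by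
  rw [ofReal_pow, ← mul_conj]
  simp only [outerSelf, PiLp.inner_apply, Fintype.sum_prod_type, map_mul,
    map_sum, inner_apply, conj_conj, sum_mul, mul_sum]
  rw [sum_comm]
  refine sum_congr rfl fun a _ => sum_congr rfl fun b _ => ?_
  ring

lemma inner_identityVec_outerSelf [DecidableEq ι] (x : EuclideanSpace 𝕜 ι) :
    ⟪identityVec, outerSelf x⟫_𝕜 = ((‖x‖ ^ 2 : ℝ) : 𝕜) := by
  simp [identityVec, outerSelf, PiLp.inner_apply, Fintype.sum_prod_type, apply_ite (starRingEnd 𝕜),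
    mul_conj, EuclideanSpace.norm_sq_eq]

lemma norm_identityVec_sq [DecidableEq ι] :
    ‖(identityVec : EuclideanSpace 𝕜 (ι × ι))‖ ^ 2 = Fintype.card ι := by
  simp only [EuclideanSpace.norm_sq_eq, identityVec, Fintype.sum_prod_type,
    apply_ite (fun z : 𝕜 => ‖z‖ ^ 2), norm_one, one_pow, norm_zero, zero_pow two_ne_zero,
    sum_ite_eq, mem_univ, if_true, sum_const, card_univ, nsmul_one]

def framePotential (φ : κ → EuclideanSpace 𝕜 ι) : ℝ :=
  ∑ j, ∑ k, ‖⟪φ j, φ k⟫_𝕜‖ ^ 2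

lemma norm_sum_outerSelf_sq (φ : κ → EuclideanSpace 𝕜 ι) :
    ‖∑ j, outerSelf (φ j)‖ ^ 2 = framePotential φ := by
  rw [← ofReal_inj (K := 𝕜), ofReal_pow, ← inner_self_eq_norm_sq_to_K, sum_inner, framePotential,
    ofReal_sum]
  simp only [inner_sum, inner_outerSelf, ofReal_sum]

lemma sq_sum_norm_sq_le_card_mul_framePotential (φ : κ → EuclideanSpace 𝕜 ι) :
    (∑ j, ‖φ j‖ ^ 2) ^ 2 ≤ Fintype.card ι * framePotential φ := by
  classical
  have h := norm_inner_le_norm (𝕜 := 𝕜) identityVec (∑ j, outerSelf (φ j))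
  rw [inner_sum] at h
  simp only [inner_identityVec_outerSelf, ← ofReal_sum, norm_ofReal] at h
  rw [← norm_identityVec_sq (𝕜 := 𝕜), ← norm_sum_outerSelf_sq, ← mul_pow]
  exact pow_le_pow_left₀ (by positivity) ((le_abs_self _).trans h) 2

lemma framePotential_eq_sum_add_sum_offDiag [DecidableEq κ] (φ : κ → EuclideanSpace 𝕜 ι) :
    framePotential φ = ∑ j, ‖φ j‖ ^ 4 + ∑ p ∈ univ.offDiag, ‖⟪φ p.1, φ p.2⟫_𝕜‖ ^ 2 := by
  rw [framePotential, ← sum_product', ← diag_union_offDiag,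
    sum_union (disjoint_diag_offDiag _), sum_diag]
  simp [inner_self_eq_norm_sq_to_K, ← pow_mul]

lemma framePotential_le_of_norm_inner_le [DecidableEq κ] {φ : κ → EuclideanSpace 𝕜 ι}
    (hφ : ∀ j, ‖φ j‖ = 1) {M : ℝ} (hM : ∀ p ∈ univ.offDiag, ‖⟪φ p.1, φ p.2⟫_𝕜‖ ≤ M) :
    framePotential φ ≤ Fintype.card κ + (Fintype.card κ ^ 2 - Fintype.card κ) * M ^ 2 := by
  have hoff : ∑ p ∈ univ.offDiag, ‖⟪φ p.1, φ p.2⟫_𝕜‖ ^ 2 ≤ (univ.offDiag).card • M ^ 2 :=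
    sum_le_card_nsmul _ _ _ fun p hp => pow_le_pow_left₀ (norm_nonneg _) (hM p hp) 2
  have hcard : ((univ : Finset κ).offDiag.card : ℝ) = Fintype.card κ ^ 2 - Fintype.card κ := by
    rw [offDiag_card, Nat.cast_sub (Nat.le_mul_self _), card_univ]
    push_cast
    ring
  rw [nsmul_eq_mul, hcard] at hoff
  rw [framePotential_eq_sum_add_sum_offDiag]
  simpa [hφ] using hoff

end FramePotential

theorem welch_bound {d n : ℕ} (hn : 2 ≤ n)
    (φ : Fin n → EuclideanSpace ℂ (Fin d)) (hφ : ∀ j, ‖φ j‖ = 1) :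
    Real.sqrt (((n : ℝ) - d) / (d * ((n : ℝ) - 1))) ≤
      (Finset.univ.offDiag).sup' (offDiag_univ_nonempty hn)
        (fun p => ‖⟪φ p.1, φ p.2⟫‖) := by
  set M := (univ.offDiag).sup' (offDiag_univ_nonempty hn) fun p : Fin n × Fin n => ‖⟪φ p.1, φ p.2⟫‖
  have hM : ∀ p ∈ univ.offDiag, ‖⟪φ p.1, φ p.2⟫‖ ≤ M := fun p hp =>
    le_sup' (fun p : Fin n × Fin n => ‖⟪φ p.1, φ p.2⟫‖) hp
  obtain ⟨p, hp⟩ := offDiag_univ_nonempty hn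
  have hM0 : 0 ≤ M := (norm_nonneg _).trans (hM p hp)
  have hframe : (n : ℝ) ^ 2 ≤ d * (n + (n ^ 2 - n) * M ^ 2) :=
    calc (n : ℝ) ^ 2 = (∑ j, ‖φ j‖ ^ 2) ^ 2 := by simp [hφ]
      _ ≤ d * framePotential φ := by simpa using sq_sum_norm_sq_le_card_mul_framePotential φ
      _ ≤ d * (n + (n ^ 2 - n) * M ^ 2) := by
        gcongr
        simpa using framePotential_le_of_norm_inner_le hφ hM
  have hn' : (2 : ℝ) ≤ n := by exact_mod_cast hn
  have hd : (0 : ℝ) < d := Nat.cast_pos.mpr <| Nat.pos_of_ne_zero fun hd => by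
    simp only [hd, CharP.cast_eq_zero, zero_mul] at hframe
    nlinarith
  rw [Real.sqrt_le_left hM0, div_le_iff₀ (by nlinarith)]
  nlinarith
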